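/- Let d0 > 0, β > 0, σ > 0, N ≥ 1, let x_1, …, x_N ∈ ℝ², let s ∈ ℝ², and let W ⊂ ℝ² be a compact measurable set with Lebesgue area A_W. Define g_i(y) = ln( (d0 + ‖y − x_i‖^β) / (d0 + ‖s − x_i‖^β) ). Suppose U ≥ 0 and L ≥ 0 satisfy |g_i(y)| ≤ U for all y ∈ W and all i, and Σ_{i=1}^{N} g_i(y)² ≥ L for all y ∈ W. Set η = √(U² + L/(2N)) − U, and let n_1, …, n_N be real numbers with |n_i| ≤ η for all i. Then ∫_W exp( − Σ_{i=1}^{N} (g_i(y) + n_i)² / (2σ²) ) dy ≤ A_W · exp( − L / (4σ²) ). -/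

import Mathlib

/-!
Since `|g_i n_i| ≤ U η`, each square `(g_i + n_i)²` is at least `g_i² - 2 U η`, and the choice of
`η` makes `2 N U η ≤ L / 2`. Hence the exponent is at most `-L / (4 σ²)` on all of `W`, and the
integral is at most the area of `W` times this constant.
-/

open Real MeasureTheory

lemma two_mul_mul_sqrt_sq_add_sub_le (U : ℝ) {a : ℝ} (ha : 0 ≤ a) :
    2 * U * (√(U ^ 2 + a) - U) ≤ a := by
  -- with `t = √(U² + a)`, `2 U (t - U) = a - (t - U)²`
  have ht : √(U ^ 2 + a) ^ 2 = U ^ 2 + a := sq_sqrt (by positivity)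
  nlinarith [sq_nonneg (√(U ^ 2 + a) - U)]

lemma sq_sub_le_sq_add_of_abs_le {g n U η : ℝ} (hg : |g| ≤ U) (hn : |n| ≤ η) :
    g ^ 2 - 2 * U * η ≤ (g + n) ^ 2 := by
  have hgn : |g * n| ≤ U * η := by
    rw [abs_mul]
    exact mul_le_mul hg hn (abs_nonneg n) ((abs_nonneg g).trans hg)
  nlinarith [neg_abs_le (g * n), sq_nonneg n]

lemma half_le_sum_sq_add_of_abs_le {ι : Type*} [Fintype ι] [Nonempty ι] {g n : ι → ℝ}
    {U L : ℝ} (hL : 0 ≤ L) (hg : ∀ i, |g i| ≤ U)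
    (hn : ∀ i, |n i| ≤ √(U ^ 2 + L / (2 * Fintype.card ι)) - U) (hgL : L ≤ ∑ i, g i ^ 2) :
    L / 2 ≤ ∑ i, (g i + n i) ^ 2 := by
  set η := √(U ^ 2 + L / (2 * Fintype.card ι)) - U
  have hcard : (0 : ℝ) < Fintype.card ι := by exact_mod_cast Fintype.card_pos
  have hcost : Fintype.card ι * (2 * U * η) ≤ L / 2 :=
    calc Fintype.card ι * (2 * U * η)
        ≤ Fintype.card ι * (L / (2 * Fintype.card ι)) :=
          mul_le_mul_of_nonneg_left (two_mul_mul_sqrt_sq_add_sub_le U (by positivity)) hcard.le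
      _ = L / 2 := by field_simp
  calc L / 2 ≤ ∑ i, g i ^ 2 - Fintype.card ι * (2 * U * η) := by linarith
    _ = ∑ i, (g i ^ 2 - 2 * U * η) := by
      rw [Finset.sum_sub_distrib, Finset.sum_const, Finset.card_univ, nsmul_eq_mul]
    _ ≤ ∑ i, (g i + n i) ^ 2 :=
      Finset.sum_le_sum fun i _ => sq_sub_le_sq_add_of_abs_le (hg i) (hn i)

lemma setIntegral_le_measureReal_mul_of_le {X : Type*} [MeasurableSpace X] {μ : Measure X}
    {s : Set X} {f : X → ℝ} {C : ℝ} (hs : μ s < ⊤) (hf_nonneg : ∀ x ∈ s, 0 ≤ f x)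
    (hf : ∀ x ∈ s, f x ≤ C) :
    ∫ x in s, f x ∂μ ≤ μ.real s * C := by
  calc ∫ x in s, f x ∂μ ≤ ‖∫ x in s, f x ∂μ‖ := le_norm_self _
    _ ≤ C * μ.real s := norm_setIntegral_le_of_norm_le_const hs fun x hx => by
      rw [Real.norm_of_nonneg (hf_nonneg x hx)]
      exact hf x hx
    _ = μ.real s * C := mul_comm _ _

theorem wrong_hypothesis_integral_bound_general
    (d0 β σ : ℝ)
    (N : ℕ) (hN : 1 ≤ N)
    (x : Fin N → EuclideanSpace ℝ (Fin 2)) (s : EuclideanSpace ℝ (Fin 2))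
    (W : Set (EuclideanSpace ℝ (Fin 2))) (hWc : IsCompact W)
    (U L : ℝ) (hL : 0 ≤ L)
    (hgU : ∀ y ∈ W, ∀ i,
      |Real.log ((d0 + ‖y - x i‖ ^ β) / (d0 + ‖s - x i‖ ^ β))| ≤ U)
    (hgL : ∀ y ∈ W,
      L ≤ ∑ i, (Real.log ((d0 + ‖y - x i‖ ^ β) / (d0 + ‖s - x i‖ ^ β))) ^ 2)
    (η : ℝ) (hη : η = Real.sqrt (U ^ 2 + L / (2 * N)) - U)
    (n : Fin N → ℝ) (hn : ∀ i, |n i| ≤ η) :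
    (∫ y in W, Real.exp (-(∑ i,
        (Real.log ((d0 + ‖y - x i‖ ^ β) / (d0 + ‖s - x i‖ ^ β)) + n i) ^ 2)
        / (2 * σ ^ 2)))
      ≤ (volume W).toReal * Real.exp (-L / (4 * σ ^ 2)) := by
  have : Nonempty (Fin N) := ⟨⟨0, hN⟩⟩
  subst hη
  refine setIntegral_le_measureReal_mul_of_le hWc.measure_lt_top (fun _ _ => (exp_pos _).le)
    fun y hy => exp_le_exp.2 ?_
  have hsum := half_le_sum_sq_add_of_abs_le hL (hgU y hy) (by simpa using hn) (hgL y hy)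
  rw [neg_div, neg_div, neg_le_neg_iff, show 4 * σ ^ 2 = 2 * (2 * σ ^ 2) by ring,
    ← div_div]
  gcongr

/-- Upper bound for the wrong-hypothesis conditional density integral (α = 2). -/
theorem wrong_hypothesis_integral_bound
    (d0 β σ : ℝ) (hd0 : 0 < d0) (hβ : 0 < β) (hσ : 0 < σ)
    (N : ℕ) (hN : 1 ≤ N)
    (x : Fin N → EuclideanSpace ℝ (Fin 2)) (s : EuclideanSpace ℝ (Fin 2))
    (W : Set (EuclideanSpace ℝ (Fin 2))) (hWc : IsCompact W) (hWm : MeasurableSet W)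
    (U L : ℝ) (hU : 0 ≤ U) (hL : 0 ≤ L)
    (hgU : ∀ y ∈ W, ∀ i,
      |Real.log ((d0 + ‖y - x i‖ ^ β) / (d0 + ‖s - x i‖ ^ β))| ≤ U)
    (hgL : ∀ y ∈ W,
      L ≤ ∑ i, (Real.log ((d0 + ‖y - x i‖ ^ β) / (d0 + ‖s - x i‖ ^ β))) ^ 2)
    (η : ℝ) (hη : η = Real.sqrt (U ^ 2 + L / (2 * N)) - U)
    (n : Fin N → ℝ) (hn : ∀ i, |n i| ≤ η) :
    (∫ y in W, Real.exp (-(∑ i,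
        (Real.log ((d0 + ‖y - x i‖ ^ β) / (d0 + ‖s - x i‖ ^ β)) + n i) ^ 2)
        / (2 * σ ^ 2)))
      ≤ (volume W).toReal * Real.exp (-L / (4 * σ ^ 2)) :=
  wrong_hypothesis_integral_bound_general d0 β σ N hN x s W hWc U L hL hgU hgL η hη n hn
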